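/- arXiv:2510.17350 — 3 statements merged into one kernel-verified Lean document; each statement's English description precedes it below -/
import Mathlib

section
/- Let V : ℝ × ℝ^n → ℝ^n be smooth and 2π-periodic in each of its n+1 variables, and let ν ∈ ℤ^n. Then there exists a smooth map β : ℝ × ℝ^n → ℝ^n, 2π-periodic in each of its n+1 variables, such that ∂_t β(t,x) − D_xβ(t,x)[ν] = V(t,x) − ⟨V⟩_ν(x + tν) for all (t,x) ∈ ℝ × ℝ^n, where D_xβ(t,x)[ν] denotes the directional derivative of β(t,·) at x in the direction ν. -/
open Real

/-- The resonant average `⟨V⟩_ν(x) := (1/(2π)) ∫₀^{2π} V(τ, x − τν) dτ`. -/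
noncomputable def resAvg {n : ℕ} (ν : Fin n → ℤ)
    (V : ℝ × (Fin n → ℝ) → (Fin n → ℝ)) (x : Fin n → ℝ) : Fin n → ℝ :=
  (2 * π)⁻¹ • ∫ τ in (0:ℝ)..(2 * π), V (τ, x - τ • fun i => (ν i : ℝ))

open Real MeasureTheory Filter Metric Set intervalIntegral
open scoped ENNReal NNReal Topology ContDiff
set_option linter.unusedSectionVars false
set_option maxHeartbeats 1000000

section Param

variable {E F : Type*} [NormedAddCommGroup E] [NormedSpace ℝ E]
  [NormedAddCommGroup F] [NormedSpace ℝ F] [CompleteSpace F]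

universe uE uG in
lemma param_aux {E' : Type uE} [NormedAddCommGroup E'] [NormedSpace ℝ E'] :
    ∀ (m : ℕ) {G : Type (max uE uG)} [NormedAddCommGroup G] [NormedSpace ℝ G] [CompleteSpace G]
      (f : ℝ × E' → G), ContDiff ℝ m f → ∀ a b : ℝ,
      ContDiff ℝ m (fun x : E' => ∫ s in a..b, f (s, x)) := by
  intro m
  induction m with
  | zero =>
    intro G _ _ _ f hf a b
    rw [Nat.cast_zero, contDiff_zero] at hf ⊢
    exact intervalIntegral.continuous_parametric_intervalIntegral_of_continuous'
      (f := fun x s => f (s, x)) (hf.comp (continuous_snd.prodMk continuous_fst)) a b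
  | succ m ih =>
    intro G _ _ _ f hf a b
    rw [Nat.cast_succ] at hf ⊢
    rw [contDiff_succ_iff_hasFDerivAt]
    let g : ℝ × E' → E' →L[ℝ] G := fun p => fderiv ℝ (fun y => f (p.1, y)) p.2
    have hg : ContDiff ℝ m g :=
      ContDiff.fderiv (f := fun (p : ℝ × E') y => f (p.1, y))
        (hf.comp (contDiff_fst.fst.prodMk contDiff_snd)) contDiff_snd le_rfl
    refine ⟨fun x => ∫ s in a..b, g (s, x), ih g hg a b, fun x₀ => ?_⟩
    have hd : Differentiable ℝ f := hf.differentiable (by simp)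
    obtain ⟨K, hK⟩ := (isCompact_uIcc.prod (isCompact_singleton (x := x₀))).exists_bound_of_continuousOn
      hg.continuous.continuousOn
    obtain ⟨u, v, -, hv, hu, hxv, huv⟩ := generalized_tube_lemma isCompact_uIcc
      (isCompact_singleton (x := x₀))
      (isOpen_lt (continuous_norm.comp hg.continuous) continuous_const :
        IsOpen {p | ‖g p‖ < K + 1})
      (fun p hp => by have := hK p hp; simp only [Set.mem_setOf_eq]; linarith)
    exact intervalIntegral.hasFDerivAt_integral_of_dominated_of_fderiv_le
      (F := fun x t => f (t, x)) (F' := fun x t => g (t, x)) (bound := fun _ => K + 1)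
      (hv.mem_nhds (hxv (Set.mem_singleton x₀)))
      (Filter.Eventually.of_forall fun x =>
        (hf.continuous.comp (continuous_id.prodMk continuous_const)).aestronglyMeasurable)
      ((hf.continuous.comp (continuous_id.prodMk continuous_const)).intervalIntegrable a b)
      ((hg.continuous.comp (continuous_id.prodMk continuous_const)).aestronglyMeasurable)
      (Filter.Eventually.of_forall fun t ht x hx =>
        (huv ⟨hu (Set.uIoc_subset_uIcc ht), hx⟩).le)
      intervalIntegrable_const
      (Filter.Eventually.of_forall fun t _ x _ =>
        ((hd.comp (differentiable_const t |>.prodMk differentiable_id)) x).hasFDerivAt)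

/-- Analyticity (`C^ω` smoothness) of a parametric interval integral. -/
lemma contDiff_top_parametric_intervalIntegral {f : ℝ × E → F} (hf : ContDiff ℝ (⊤ : ℕ∞) f)
    (a b : ℝ) : ContDiff ℝ (⊤ : ℕ∞) fun x : E => ∫ s in a..b, f (s, x) := by
  rw [contDiff_infty] at hf ⊢
  intro m
  let e : ULift.{u_1} F ≃L[ℝ] F := ContinuousLinearEquiv.ulift
  have h1 : ContDiff ℝ m (fun p => e.symm (f p)) := e.symm.contDiff.comp (hf m)
  have h2 := param_aux m (fun p => e.symm (f p)) h1 a b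
  have h3 := e.contDiff.comp h2
  convert h3 using 1
  funext x
  simp only [Function.comp_apply]
  have hint : IntervalIntegrable (fun s => e.symm (f (s, x))) volume a b :=
    ((e.symm.continuous.comp (hf 0).continuous).comp
      (continuous_id.prodMk continuous_const)).intervalIntegrable a b
  rw [← ContinuousLinearEquiv.coe_coe e,
    ← (e : ULift.{u_1} F →L[ℝ] F).intervalIntegral_comp_comm hint]
  simp

end Param

section Periodic
variable {n : ℕ} {V : ℝ × (Fin n → ℝ) → (Fin n → ℝ)}

lemma upd_step (hVx : ∀ t x i, V (t, Function.update x i (x i + 2 * π)) = V (t, x))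
    (t : ℝ) (x : Fin n → ℝ) (i : Fin n) (v : ℝ) :
    V (t, Function.update x i (v + 2 * π)) = V (t, Function.update x i v) := by
  have h := hVx t (Function.update x i v) i
  rwa [Function.update_idem, Function.update_self] at h

lemma upd_shiftZ (hVx : ∀ t x i, V (t, Function.update x i (x i + 2 * π)) = V (t, x))
    (t : ℝ) (x : Fin n → ℝ) (i : Fin n) (v : ℝ) (k : ℤ) :
    V (t, Function.update x i (v + 2 * π * k)) = V (t, Function.update x i v) := by
  induction k using Int.induction_on with
  | zero => norm_num
  | succ m ih =>
      have harg : v + 2 * π * ((m : ℤ) + 1 : ℤ) = (v + 2 * π * (m : ℤ)) + 2 * π := by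
        push_cast; ring
      rw [harg, upd_step hVx, ih]
  | pred m ih =>
      have harg : v + 2 * π * (-(m : ℤ) : ℤ) = (v + 2 * π * (-(m : ℤ) - 1 : ℤ)) + 2 * π := by
        push_cast; ring
      rw [harg, upd_step hVx] at ih
      exact ih

lemma shiftVec (hVx : ∀ t x i, V (t, Function.update x i (x i + 2 * π)) = V (t, x))
    (t : ℝ) (x : Fin n → ℝ) (m : Fin n → ℤ) :
    V (t, x + fun i => 2 * π * (m i : ℝ)) = V (t, x) := by
  have main : ∀ s : Finset (Fin n), ∀ x : Fin n → ℝ,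
      V (t, x + fun i => if i ∈ s then 2 * π * (m i : ℝ) else 0) = V (t, x) := by
    intro s
    induction s using Finset.induction_on with
    | empty =>
        intro x
        have : (x + fun i => if i ∈ (∅ : Finset (Fin n)) then 2 * π * (m i : ℝ) else 0) = x := by
          funext j; simp
        rw [this]
    | @insert a s ha ih =>
        intro x
        have key : (x + fun i => if i ∈ insert a s then 2 * π * (m i : ℝ) else 0) =
            Function.update (x + fun i => if i ∈ s then 2 * π * (m i : ℝ) else 0) a
              ((x + fun i => if i ∈ s then 2 * π * (m i : ℝ) else 0) a + 2 * π * (m a : ℝ)) := by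
          funext j
          by_cases hj : j = a
          · subst hj
            simp [Function.update_self, ha]
          · simp [Function.update_of_ne hj, Pi.add_apply, Finset.mem_insert, hj]
        rw [key]
        set y := x + fun i => if i ∈ s then 2 * π * (m i : ℝ) else 0 with hy
        have h1 : V (t, Function.update y a (y a + 2 * π * (m a : ℝ))) = V (t, y) := by
          have := upd_shiftZ hVx t y a (y a) (m a)
          rwa [Function.update_eq_self] at this
        rw [h1, ih x]
  have := main Finset.univ x
  simpa using this

lemma updAdd (x w : Fin n → ℝ) (i : Fin n) :
    Function.update x i (x i + 2 * π) + w =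
      Function.update (x + w) i ((x + w) i + 2 * π) := by
  funext j
  by_cases hj : j = i
  · subst hj
    simp [Function.update_self]
    ring
  · simp [Function.update_of_ne hj]

lemma updSub (x w : Fin n → ℝ) (i : Fin n) :
    Function.update x i (x i + 2 * π) - w =
      Function.update (x - w) i ((x - w) i + 2 * π) := by
  funext j
  by_cases hj : j = i
  · subst hj
    simp [Function.update_self]
    ring
  · simp [Function.update_of_ne hj]

end Periodic


open Real

/-- Let `V : ℝ × ℝ^n → ℝ^n` be smooth and `2π`-periodic in each of its `n+1`
variables, and `ν ∈ ℤ^n`. Then there is a smooth map `β`, `2π`-periodic in each variable,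
with `∂_t β(t,x) − D_xβ(t,x)[ν] = V(t,x) − ⟨V⟩_ν(x + tν)` for all `(t,x)`. -/
theorem stmt_4 {n : ℕ} (V : ℝ × (Fin n → ℝ) → (Fin n → ℝ))
    (hV : ContDiff ℝ (⊤ : ℕ∞) V)
    (hVt : ∀ t x, V (t + 2 * π, x) = V (t, x))
    (hVx : ∀ t x i, V (t, Function.update x i (x i + 2 * π)) = V (t, x))
    (ν : Fin n → ℤ) :
    ∃ β : ℝ × (Fin n → ℝ) → (Fin n → ℝ),
      ContDiff ℝ (⊤ : ℕ∞) β ∧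
      (∀ t x, β (t + 2 * π, x) = β (t, x)) ∧
      (∀ t x i, β (t, Function.update x i (x i + 2 * π)) = β (t, x)) ∧
      ∀ t x,
        deriv (fun s => β (s, x)) t -
          fderiv ℝ (fun y => β (t, y)) x (fun i => (ν i : ℝ)) =
        V (t, x) - resAvg ν V (x + t • fun i => (ν i : ℝ)) := by
  have hπ : (2 * π) ≠ 0 := by positivity
  set c : Fin n → ℝ := (fun i => (ν i : ℝ)) with hc
  -- continuity
  have hVc : Continuous V := hV.continuous
  -- smoothness of resAvg
  have hres : ContDiff ℝ (⊤ : ℕ∞) (resAvg ν V) := by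
    have h1 : ContDiff ℝ (⊤ : ℕ∞) fun q : ℝ × (Fin n → ℝ) => V (q.1, q.2 - q.1 • c) :=
      hV.comp (contDiff_fst.prodMk (contDiff_snd.sub (contDiff_fst.smul contDiff_const)))
    have h2 := contDiff_top_parametric_intervalIntegral h1 0 (2 * π)
    exact h2.const_smul ((2 * π)⁻¹)
  -- resAvg periodicity lemmas
  have hresShift : ∀ y, resAvg ν V (y + fun i => 2 * π * (ν i : ℝ)) = resAvg ν V y := by
    intro y
    show (2 * π)⁻¹ • ∫ τ in (0:ℝ)..(2 * π), V (τ, (y + fun i => 2 * π * (ν i : ℝ)) - τ • c) =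
      (2 * π)⁻¹ • ∫ τ in (0:ℝ)..(2 * π), V (τ, y - τ • c)
    congr 1
    refine intervalIntegral.integral_congr fun τ _ => ?_
    have harg : (y + fun i => 2 * π * (ν i : ℝ)) - τ • c =
        (y - τ • c) + fun i => 2 * π * (ν i : ℝ) := by
      funext j; simp [hc]; ring
    rw [harg, shiftVec hVx]
  have hresUpd : ∀ y i, resAvg ν V (Function.update y i (y i + 2 * π)) = resAvg ν V y := by
    intro y i
    show (2 * π)⁻¹ • ∫ τ in (0:ℝ)..(2 * π), V (τ, Function.update y i (y i + 2 * π) - τ • c) =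
      (2 * π)⁻¹ • ∫ τ in (0:ℝ)..(2 * π), V (τ, y - τ • c)
    congr 1
    refine intervalIntegral.integral_congr fun τ _ => ?_
    rw [updSub, hVx]
  -- the candidate
  refine ⟨fun p => (2 * π)⁻¹ • (∫ s in (0:ℝ)..(2 * π), s • V (p.1 + s, p.2 - s • c))
      - π • resAvg ν V (p.2 + p.1 • c), ?_, ?_, ?_, ?_⟩
  · -- smoothness
    have h1 : ContDiff ℝ (⊤ : ℕ∞) fun q : ℝ × (ℝ × (Fin n → ℝ)) =>
        q.1 • V (q.2.1 + q.1, q.2.2 - q.1 • c) :=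
      contDiff_fst.smul (hV.comp ((contDiff_snd.fst.add contDiff_fst).prodMk
        (contDiff_snd.snd.sub (contDiff_fst.smul contDiff_const))))
    have h2 := contDiff_top_parametric_intervalIntegral h1 0 (2 * π)
    exact (h2.const_smul ((2 * π)⁻¹)).sub
      ((hres.comp (contDiff_snd.add (contDiff_fst.smul contDiff_const))).const_smul π)
  · -- t-periodicity
    intro t x
    simp only []
    have hint : (∫ s in (0:ℝ)..(2 * π), s • V (t + 2 * π + s, x - s • c)) =
        ∫ s in (0:ℝ)..(2 * π), s • V (t + s, x - s • c) := by
      refine intervalIntegral.integral_congr fun s _ => ?_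
      rw [show t + 2 * π + s = (t + s) + 2 * π by ring, hVt]
    have harg : x + (t + 2 * π) • c = (x + t • c) + fun i => 2 * π * (ν i : ℝ) := by
      funext j; simp [hc]; ring
    rw [hint, harg, hresShift]
  · -- x-periodicity
    intro t x i
    simp only []
    have hint : (∫ s in (0:ℝ)..(2 * π), s • V (t + s, Function.update x i (x i + 2 * π) - s • c)) =
        ∫ s in (0:ℝ)..(2 * π), s • V (t + s, x - s • c) := by
      refine intervalIntegral.integral_congr fun s _ => ?_
      rw [updSub, hVx]
    have harg : Function.update x i (x i + 2 * π) + t • c =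
        Function.update (x + t • c) i ((x + t • c) i + 2 * π) := updAdd x (t • c) i
    rw [hint, harg, hresUpd]
  · -- the PDE
    intro t x
    set βf : ℝ × (Fin n → ℝ) → (Fin n → ℝ) := fun p =>
      (2 * π)⁻¹ • (∫ s in (0:ℝ)..(2 * π), s • V (p.1 + s, p.2 - s • c))
        - π • resAvg ν V (p.2 + p.1 • c) with hβf
    have hβ : ContDiff ℝ (⊤ : ℕ∞) βf := by
      have h1 : ContDiff ℝ (⊤ : ℕ∞) fun q : ℝ × (ℝ × (Fin n → ℝ)) =>
          q.1 • V (q.2.1 + q.1, q.2.2 - q.1 • c) :=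
        contDiff_fst.smul (hV.comp ((contDiff_snd.fst.add contDiff_fst).prodMk
          (contDiff_snd.snd.sub (contDiff_fst.smul contDiff_const))))
      have h2 := contDiff_top_parametric_intervalIntegral h1 0 (2 * π)
      exact (h2.const_smul ((2 * π)⁻¹)).sub
        ((hres.comp (contDiff_snd.add (contDiff_fst.smul contDiff_const))).const_smul π)
    have hβd : Differentiable ℝ βf := hβ.differentiable (by simp)
    have hD : HasFDerivAt βf (fderiv ℝ βf (t, x)) (t, x) := (hβd (t, x)).hasFDerivAt
    set D := fderiv ℝ βf (t, x) with hDdef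
    have h_t : HasDerivAt (fun s => βf (s, x)) (D (1, 0)) t :=
      hD.comp_hasDerivAt (f := fun s : ℝ => (s, x)) t ((hasDerivAt_id t).prodMk (hasDerivAt_const t x))
    have h_x : HasFDerivAt (fun y => βf (t, y))
        (D.comp (ContinuousLinearMap.inr ℝ ℝ (Fin n → ℝ))) x :=
      hD.comp x (hasFDerivAt_prodMk_right t x)
    set y : Fin n → ℝ := x + t • c with hy
    have hyx : y - t • c = x := add_sub_cancel_right x (t • c)
    set F : ℝ → (Fin n → ℝ) := fun w => V (w, y - w • c) with hF
    have hFc : Continuous F := hVc.comp (by fun_prop)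
    have hFper : Function.Periodic F (2 * π) := by
      intro w
      show V (w + 2 * π, y - (w + 2 * π) • c) = V (w, y - w • c)
      rw [hVt]
      have harg : y - (w + 2 * π) • c = (y - w • c) + fun i => 2 * π * (((-ν i : ℤ)) : ℝ) := by
        funext j; simp [hc]; push_cast; ring
      rw [harg, shiftVec hVx]
    set A₀ : Fin n → ℝ := ∫ w in (0:ℝ)..(2 * π), F w with hA₀
    have hA : ∀ u : ℝ, (∫ w in u..(u + 2 * π), F w) = A₀ := by
      intro u
      have := hFper.intervalIntegral_add_eq u 0
      rwa [zero_add] at this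
    have hresy : resAvg ν V y = (2 * π)⁻¹ • A₀ := rfl
    set G : ℝ → (Fin n → ℝ) := fun w => w • F w with hG
    have hGc : Continuous G := continuous_id.smul hFc
    have hP : ∀ v : ℝ, HasDerivAt (fun r => ∫ w in (0:ℝ)..r, G w) (G v) v := fun v =>
      intervalIntegral.integral_hasDerivAt_right (hGc.intervalIntegrable 0 v)
        (hGc.stronglyMeasurableAtFilter volume (nhds v)) hGc.continuousAt
    set Ψ : ℝ → (Fin n → ℝ) :=
      fun u => (∫ w in (0:ℝ)..(u + 2 * π), G w) - ∫ w in (0:ℝ)..u, G w with hΨ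
    have hΨeq : ∀ u, Ψ u = ∫ w in u..(u + 2 * π), G w := fun u =>
      intervalIntegral.integral_interval_sub_left (hGc.intervalIntegrable 0 (u + 2 * π))
        (hGc.intervalIntegrable 0 u)
    have hΨ' : HasDerivAt Ψ (G (t + 2 * π) - G t) t := by
      have h1 : HasDerivAt (fun u : ℝ => ∫ w in (0:ℝ)..(u + 2 * π), G w) (G (t + 2 * π)) t := by
        have := (hP (t + 2 * π)).scomp t ((hasDerivAt_id t).add_const (2 * π))
        simpa [Function.comp_def] using this
      exact h1.sub (hP t)
    have h_formula : ∀ u : ℝ, βf (u, y - u • c) =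
        (2 * π)⁻¹ • (Ψ u - u • A₀) - π • ((2 * π)⁻¹ • A₀) := by
      intro u
      have e1 : (∫ s in (0:ℝ)..(2 * π), s • V (u + s, (y - u • c) - s • c)) = Ψ u - u • A₀ := by
        have harg : ∀ s : ℝ, (y - u • c) - s • c = y - (u + s) • c := by
          intro s; funext j; simp; ring
        calc (∫ s in (0:ℝ)..(2 * π), s • V (u + s, (y - u • c) - s • c))
            = ∫ s in (0:ℝ)..(2 * π), (fun w => (w - u) • F w) (s + u) := by
              refine intervalIntegral.integral_congr fun s _ => ?_
              show s • V (u + s, (y - u • c) - s • c) = (s + u - u) • F (s + u)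
              rw [harg s, show s + u - u = s by ring, show s + u = u + s from add_comm s u]
          _ = ∫ w in (0:ℝ) + u..(2 * π) + u, (w - u) • F w :=
              intervalIntegral.integral_comp_add_right (fun w => (w - u) • F w) u
          _ = ∫ w in u..(u + 2 * π), (w • F w - u • F w) := by
              rw [zero_add, add_comm (2 * π) u]
              refine intervalIntegral.integral_congr fun w _ => sub_smul w u (F w)
          _ = (∫ w in u..(u + 2 * π), G w) - ∫ w in u..(u + 2 * π), u • F w :=
              intervalIntegral.integral_sub (hGc.intervalIntegrable _ _)
                ((hFc.const_smul u : Continuous fun w => u • F w).intervalIntegrable _ _)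
          _ = Ψ u - u • A₀ := by
              rw [hΨeq u, intervalIntegral.integral_smul, hA u]
      show (2 * π)⁻¹ • (∫ s in (0:ℝ)..(2 * π), s • V (u + s, (y - u • c) - s • c))
          - π • resAvg ν V ((y - u • c) + u • c)
          = (2 * π)⁻¹ • (Ψ u - u • A₀) - π • ((2 * π)⁻¹ • A₀)
      rw [e1, sub_add_cancel, hresy]
    have h_char : HasDerivAt (fun u => βf (u, y - u • c)) (D (1, -c)) t := by
      have hγ : HasDerivAt (fun u : ℝ => ((u : ℝ), y - u • c)) ((1 : ℝ), -c) t := by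
        have h1 : HasDerivAt (fun u : ℝ => y - u • c) (-c) t := by
          have := ((hasDerivAt_id t).smul_const c).const_sub y
          simpa using this
        exact (hasDerivAt_id t).prodMk h1
      have hD' : HasFDerivAt βf D ((fun u : ℝ => ((u : ℝ), y - u • c)) t) := by
        simpa [hyx] using hD
      exact hD'.comp_hasDerivAt t hγ
    have h_char2 : HasDerivAt (fun u => βf (u, y - u • c))
        ((2 * π)⁻¹ • (G (t + 2 * π) - G t - A₀)) t := by
      have h2 : HasDerivAt (fun u : ℝ => u • A₀) A₀ t := by
        simpa using (hasDerivAt_id t).smul_const A₀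
      have h1 : HasDerivAt (fun u : ℝ => (2 * π)⁻¹ • (Ψ u - u • A₀) - π • ((2 * π)⁻¹ • A₀))
          ((2 * π)⁻¹ • (G (t + 2 * π) - G t - A₀)) t :=
        ((hΨ'.sub h2).const_smul ((2 * π)⁻¹)).sub_const _
      have hfun : (fun u => βf (u, y - u • c)) =
          fun u : ℝ => (2 * π)⁻¹ • (Ψ u - u • A₀) - π • ((2 * π)⁻¹ • A₀) := funext h_formula
      rw [hfun]; exact h1
    have hval : D (1, -c) = (2 * π)⁻¹ • (G (t + 2 * π) - G t - A₀) := h_char.unique h_char2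
    have hGsimp : G (t + 2 * π) - G t = (2 * π) • F t := by
      show (t + 2 * π) • F (t + 2 * π) - t • F t = (2 * π) • F t
      rw [hFper t, ← sub_smul]
      congr 1
      ring
    have hval2 : D (1, -c) = F t - (2 * π)⁻¹ • A₀ := by
      rw [hval, hGsimp, smul_sub, smul_smul, inv_mul_cancel₀ hπ, one_smul]
    have hderiv : deriv (fun s => βf (s, x)) t = D (1, 0) := h_t.deriv
    have hfder : fderiv ℝ (fun y' => βf (t, y')) x c = D (0, c) := by
      rw [h_x.fderiv]; rfl
    rw [hderiv, hfder]
    have hsub : D (1, 0) - D (0, c) = D (1, -c) := by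
      rw [← map_sub, Prod.mk_sub_mk, sub_zero, zero_sub]
    rw [hsub, hval2]
    show V (t, y - t • c) - (2 * π)⁻¹ • A₀ = V (t, x) - resAvg ν V (x + t • c)
    rw [hyx, ← hresy]
end

section
/- Let H be a complex Hilbert space and r ≥ 0. Let K, R : ℝ → L(H) be such that K(t) is skew-adjoint (K(t)* = −K(t)) and ‖R(t)‖ ≤ r for every t ∈ ℝ. Let u : ℝ → H be differentiable with u'(t) = K(t)(u(t)) + R(t)(u(t)) for all t. Then ‖u(t)‖ ≤ e^{r t} ‖u(0)‖ for all t ≥ 0. -/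
/-!
Along a solution, `‖u‖²` has derivative `2 re ⟪u, K u + R u⟫`. Skew-adjointness makes
`re ⟪u, K u⟫` vanish, so this derivative is at most `2 r ‖u‖²`, and Grönwall's inequality
gives `‖u t‖² ≤ e^{2 r t} ‖u 0‖²`.
-/

open Real RCLike

theorem le_mul_exp_of_hasDerivAt_le_mul {g g' : ℝ → ℝ} {c a t : ℝ}
    (hg : ∀ x, HasDerivAt g (g' x) x) (hg' : ∀ x, g' x ≤ c * g x) (hat : a ≤ t) :
    g t ≤ g a * exp (c * (t - a)) := by
  have bound := le_gronwallBound_of_liminf_deriv_right_le (f' := g') (δ := g a) (ε := 0)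
    (fun x _ => (hg x).continuousAt.continuousWithinAt)
    (fun x _ _ hr => (hg x).hasDerivWithinAt.liminf_right_slope_le hr) le_rfl
    (fun x _ => by simpa using hg' x) t ⟨hat, le_rfl⟩
  rwa [gronwallBound_ε0] at bound

theorem norm_le_exp_mul_norm_of_inner_deriv_le {F : Type*} [NormedAddCommGroup F]
    [InnerProductSpace ℝ F] {u u' : ℝ → F} {r : ℝ} (hu : ∀ t, HasDerivAt u (u' t) t)
    (hr : ∀ t, inner ℝ (u t) (u' t) ≤ r * ‖u t‖ ^ 2) {t : ℝ} (ht : 0 ≤ t) :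
    ‖u t‖ ≤ exp (r * t) * ‖u 0‖ := by
  have hsq : ‖u t‖ ^ 2 ≤ ‖u 0‖ ^ 2 * exp (2 * r * (t - 0)) :=
    le_mul_exp_of_hasDerivAt_le_mul (fun s => (hu s).norm_sq) (fun s => by linarith [hr s]) ht
  have hexp : ‖u 0‖ ^ 2 * exp (2 * r * (t - 0)) = (exp (r * t) * ‖u 0‖) ^ 2 := by
    rw [mul_pow, ← exp_nat_mul]; ring_nf
  rw [hexp] at hsq
  exact (pow_le_pow_iff_left₀ (norm_nonneg _) (by positivity) two_ne_zero).1 hsq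

theorem re_inner_apply_eq_zero_of_adjoint_eq_neg {𝕜 E : Type*} [RCLike 𝕜]
    [NormedAddCommGroup E] [InnerProductSpace 𝕜 E] [CompleteSpace E] {T : E →L[𝕜] E}
    (hT : ContinuousLinearMap.adjoint T = -T) (x : E) : re (inner 𝕜 x (T x)) = 0 := by
  have h : re (inner 𝕜 x (T x)) = -re (inner 𝕜 x (T x)) :=
    calc re (inner 𝕜 x (T x))
        = re (inner 𝕜 (ContinuousLinearMap.adjoint T x) x) := by
          rw [ContinuousLinearMap.adjoint_inner_left]
      _ = -re (inner 𝕜 (T x) x) := by rw [hT, neg_apply, inner_neg_left, map_neg]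
      _ = -re (inner 𝕜 x (T x)) := by rw [inner_re_symm]
  linarith

theorem stmt_7_general {H : Type*} [NormedAddCommGroup H] [InnerProductSpace ℂ H] [CompleteSpace H]
    (r : ℝ) (K R : ℝ → H →L[ℂ] H)
    (hK : ∀ t : ℝ, ContinuousLinearMap.adjoint (K t) = -(K t))
    (hR : ∀ t : ℝ, ‖R t‖ ≤ r)
    (u : ℝ → H) (hu : ∀ t : ℝ, HasDerivAt u (K t (u t) + R t (u t)) t) :
    ∀ t ≥ (0 : ℝ), ‖u t‖ ≤ Real.exp (r * t) * ‖u 0‖ := by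
  -- `H` as a real inner product space, with `⟪x, y⟫_ℝ = re ⟪x, y⟫_ℂ`
  let _ := InnerProductSpace.complexToReal (G := H)
  refine fun t ht => norm_le_exp_mul_norm_of_inner_deriv_le hu (fun s => ?_) ht
  calc inner ℝ (u s) (K s (u s) + R s (u s))
      = re (inner ℂ (u s) (R s (u s))) := by
        rw [real_inner_eq_re_inner ℂ, inner_add_right, map_add,
          re_inner_apply_eq_zero_of_adjoint_eq_neg (hK s), zero_add]
    _ ≤ ‖u s‖ * (‖R s‖ * ‖u s‖) :=
        (re_inner_le_norm _ _).trans (by gcongr; exact (R s).le_opNorm _)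
    _ ≤ r * ‖u s‖ ^ 2 := by nlinarith [hR s, norm_nonneg (u s)]

/-- Let `H` be a complex Hilbert space and `r ≥ 0`. Let `K, R : ℝ → L(H)`
with `K t` skew-adjoint and `‖R t‖ ≤ r` for every `t`. If `u : ℝ → H` is differentiable
with `u' t = K t (u t) + R t (u t)`, then `‖u t‖ ≤ e^{r t} ‖u 0‖` for all `t ≥ 0`. -/
theorem stmt_7 {H : Type*} [NormedAddCommGroup H] [InnerProductSpace ℂ H] [CompleteSpace H]
    (r : ℝ) (hr : 0 ≤ r) (K R : ℝ → H →L[ℂ] H)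
    (hK : ∀ t : ℝ, ContinuousLinearMap.adjoint (K t) = -(K t))
    (hR : ∀ t : ℝ, ‖R t‖ ≤ r)
    (u : ℝ → H) (hu : ∀ t : ℝ, HasDerivAt u (K t (u t) + R t (u t)) t) :
    ∀ t ≥ (0 : ℝ), ‖u t‖ ≤ Real.exp (r * t) * ‖u 0‖ :=
  stmt_7_general r K R hK hR u hu
end

section
/- Let T > 0 and define I(x,ξ) := (1/T) ∫₀^T log ‖M(t,x)ξ‖ dt for x ∈ ℝ^n and ξ ∈ ℝ^n ∖ {0}. Then for every such (x,ξ) the function s ↦ I(φ(s,x), M(s,x)ξ) is differentiable at s = 0 with derivative equal to (1/T)(log ‖M(T,x)ξ‖ − log ‖ξ‖). In particular, if C, θ > 0 are such that ‖M(T,x)ξ‖ ≤ C e^{−θT} ‖ξ‖, then this derivative is at most (log C)/T − θ, which is negative as soon as T > (log C)/θ. -/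
open intervalIntegral Real

/-- Let `T > 0` and `I(x,ξ) := (1/T) ∫₀^T log ‖M(t,x)ξ‖ dt` for `ξ ≠ 0`.
Then `s ↦ I(φ(s,x), M(s,x)ξ)` is differentiable at `s = 0` with derivative
`(1/T)(log ‖M(T,x)ξ‖ − log ‖ξ‖)`. In particular, if `C, θ > 0` and
`‖M(T,x)ξ‖ ≤ C e^{−θT} ‖ξ‖`, this derivative is at most `log C / T − θ`, which is
negative as soon as `T > log C / θ`. -/
theorem stmt_18 {n : ℕ}
    (V : EuclideanSpace ℝ (Fin n) → EuclideanSpace ℝ (Fin n))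
    (φ : ℝ → EuclideanSpace ℝ (Fin n) → EuclideanSpace ℝ (Fin n))
    (M : ℝ → EuclideanSpace ℝ (Fin n) →
      (EuclideanSpace ℝ (Fin n) →L[ℝ] EuclideanSpace ℝ (Fin n)))
    (hV : ContDiff ℝ (⊤ : ℕ∞) V)
    (hφsmooth : ContDiff ℝ (⊤ : ℕ∞) (fun p : ℝ × EuclideanSpace ℝ (Fin n) => φ p.1 p.2))
    (hφ0 : ∀ x, φ 0 x = x)
    (hφflow : ∀ t x, HasDerivAt (fun s => φ s x) (V (φ t x)) t)
    (hφgroup : ∀ s t x, φ (t + s) x = φ t (φ s x))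
    (hM₁ : ∀ t x, (M t x).comp (ContinuousLinearMap.adjoint (fderiv ℝ (φ t) x)) =
      ContinuousLinearMap.id ℝ _)
    (hM₂ : ∀ t x, (ContinuousLinearMap.adjoint (fderiv ℝ (φ t) x)).comp (M t x) =
      ContinuousLinearMap.id ℝ _)
    (T : ℝ) (hT : 0 < T)
    (x ξ : EuclideanSpace ℝ (Fin n)) (hξ : ξ ≠ 0) :
    HasDerivAt
      (fun s : ℝ => (1 / T) * ∫ t in (0:ℝ)..T, Real.log ‖M t (φ s x) (M s x ξ)‖)
      ((1 / T) * (Real.log ‖M T x ξ‖ - Real.log ‖ξ‖)) 0 ∧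
    ∀ C θ : ℝ, 0 < C → 0 < θ → ‖M T x ξ‖ ≤ C * Real.exp (-θ * T) * ‖ξ‖ →
      (1 / T) * (Real.log ‖M T x ξ‖ - Real.log ‖ξ‖) ≤ Real.log C / T - θ ∧
      (Real.log C / θ < T → Real.log C / T - θ < 0) := by
  have hφt : ∀ t, ContDiff ℝ (⊤ : ℕ∞) (φ t) := by
    intro t
    have := hφsmooth.comp (ContDiff.prodMk (contDiff_const (c := t)) contDiff_id)
    exact this
  have hφdiff : ∀ t, Differentiable ℝ (φ t) := fun t => (hφt t).differentiable (by simp)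
  -- the adjoint of the derivative, as a function
  set A : ℝ → EuclideanSpace ℝ (Fin n) →
      (EuclideanSpace ℝ (Fin n) →L[ℝ] EuclideanSpace ℝ (Fin n)) :=
    fun t y => ContinuousLinearMap.adjoint (fderiv ℝ (φ t) y) with hAdef
  have hMA₁ : ∀ t y, (M t y).comp (A t y) = ContinuousLinearMap.id ℝ _ := fun t y => hM₁ t y
  have hMA₂ : ∀ t y, (A t y).comp (M t y) = ContinuousLinearMap.id ℝ _ := fun t y => hM₂ t y
  -- chain rule for the adjoint cocycle
  have hchain : ∀ t s y, A (t + s) y = (A s y).comp (A t (φ s y)) := by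
    intro t s y
    have hfun : φ (t + s) = φ t ∘ φ s := funext fun z => hφgroup s t z
    have hfd : fderiv ℝ (φ (t + s)) y = (fderiv ℝ (φ t) (φ s y)).comp (fderiv ℝ (φ s) y) := by
      rw [hfun]
      exact fderiv_comp y ((hφdiff t) (φ s y)) ((hφdiff s) y)
    simp only [hAdef, hfd, ContinuousLinearMap.adjoint_comp]
  -- cocycle property of M
  have hco : ∀ t s y, M (t + s) y = (M t (φ s y)).comp (M s y) := by
    intro t s y
    have h1 : ((M t (φ s y)).comp (M s y)).comp (A (t + s) y)
        = ContinuousLinearMap.id ℝ _ := by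
      rw [hchain t s y, ← ContinuousLinearMap.comp_assoc,
        ContinuousLinearMap.comp_assoc (M t (φ s y)) (M s y) (A s y),
        hMA₁ s y, ContinuousLinearMap.comp_id, hMA₁ t (φ s y)]
    calc M (t + s) y
        = (ContinuousLinearMap.id ℝ _).comp (M (t + s) y) := by
          rw [ContinuousLinearMap.id_comp]
      _ = (((M t (φ s y)).comp (M s y)).comp (A (t + s) y)).comp (M (t + s) y) := by
          rw [h1]
      _ = ((M t (φ s y)).comp (M s y)).comp ((A (t + s) y).comp (M (t + s) y)) := by
          rw [ContinuousLinearMap.comp_assoc]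
      _ = (M t (φ s y)).comp (M s y) := by
          rw [hMA₂ (t + s) y, ContinuousLinearMap.comp_id]
  -- M 0 y = id
  have hA0 : ∀ y, A 0 y = ContinuousLinearMap.id ℝ _ := by
    intro y
    have hid : φ 0 = _root_.id := funext fun z => hφ0 z
    simp [hAdef, hid, fderiv_id]
  have hM0 : ∀ y, M 0 y = ContinuousLinearMap.id ℝ _ := by
    intro y
    have h := hMA₁ 0 y
    rwa [hA0 y, ContinuousLinearMap.comp_id] at h
  -- continuity of u ↦ M u x via Ring.inverse
  have hMinv : ∀ u, M u x = Ring.inverse (A u x) := by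
    intro u
    have : Ring.inverse ((⟨A u x, M u x, hMA₂ u x, hMA₁ u x⟩ :
        (EuclideanSpace ℝ (Fin n) →L[ℝ] EuclideanSpace ℝ (Fin n))ˣ) :
        EuclideanSpace ℝ (Fin n) →L[ℝ] EuclideanSpace ℝ (Fin n)) = M u x :=
      Ring.inverse_unit _
    simpa using this.symm
  have hAcont : Continuous fun u : ℝ => A u x := by
    have h1 : Continuous fun u : ℝ => fderiv ℝ (φ u) x := by
      have h0 : ContDiff ℝ 0 (fun u : ℝ => fderiv ℝ (φ u) x) :=
        hφsmooth.fderiv (g := fun _ : ℝ => x) contDiff_const (by simp)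
      exact h0.continuous
    exact (ContinuousLinearMap.adjoint.toContinuousLinearEquiv.continuous).comp h1
  have hMcont : Continuous fun u : ℝ => M u x := by
    rw [continuous_iff_continuousAt]
    intro u
    have hc : ContinuousAt Ring.inverse (A u x) :=
      NormedRing.inverse_continuousAt
        (⟨A u x, M u x, hMA₂ u x, hMA₁ u x⟩ :
          (EuclideanSpace ℝ (Fin n) →L[ℝ] EuclideanSpace ℝ (Fin n))ˣ)
    have : ContinuousAt (fun u : ℝ => Ring.inverse (A u x)) u :=
      hc.tendsto.comp hAcont.continuousAt
    exact this.congr (Filter.Eventually.of_forall fun v => (hMinv v).symm)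
  -- the function g u = log ‖M u x ξ‖ is continuous
  set g : ℝ → ℝ := fun u => Real.log ‖M u x ξ‖ with hgdef
  have hMξne : ∀ u, M u x ξ ≠ 0 := by
    intro u hzero
    apply hξ
    have h := congrArg (fun L : EuclideanSpace ℝ (Fin n) →L[ℝ] EuclideanSpace ℝ (Fin n) =>
      L ξ) (hMA₂ u x)
    simp only [ContinuousLinearMap.comp_apply, ContinuousLinearMap.id_apply] at h
    rw [← h, hzero, map_zero]
  have hnormcont : Continuous fun u : ℝ => ‖M u x ξ‖ :=
    (hMcont.clm_apply continuous_const).norm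
  have hgcont : Continuous g :=
    hnormcont.log fun u => norm_ne_zero_iff.mpr (hMξne u)
  -- rewrite the integral
  have hrw : ∀ s : ℝ, (∫ t in (0:ℝ)..T, Real.log ‖M t (φ s x) (M s x ξ)‖)
      = (∫ u in (0:ℝ)..(T + s), g u) - ∫ u in (0:ℝ)..s, g u := by
    intro s
    have hpt : ∀ t : ℝ, Real.log ‖M t (φ s x) (M s x ξ)‖ = g (t + s) := by
      intro t
      rw [hgdef]
      simp only [hco t s x, ContinuousLinearMap.comp_apply]
    have h1 : (∫ t in (0:ℝ)..T, Real.log ‖M t (φ s x) (M s x ξ)‖)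
        = ∫ t in (0:ℝ)..T, g (t + s) := by
      simp only [hpt]
    rw [h1, intervalIntegral.integral_comp_add_right g s, zero_add]
    have h2 : (∫ u in (0:ℝ)..s, g u) + (∫ u in s..(T + s), g u)
        = ∫ u in (0:ℝ)..(T + s), g u :=
      intervalIntegral.integral_add_adjacent_intervals
        (hgcont.intervalIntegrable _ _) (hgcont.intervalIntegrable _ _)
    linarith
  -- derivative of the two primitives
  have hD1 : HasDerivAt (fun s : ℝ => ∫ u in (0:ℝ)..(T + s), g u) (g T) 0 := by
    have hbase : HasDerivAt (fun y : ℝ => ∫ u in (0:ℝ)..y, g u) (g T) T :=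
      intervalIntegral.integral_hasDerivAt_right (hgcont.intervalIntegrable _ _)
        hgcont.aestronglyMeasurable.stronglyMeasurableAtFilter hgcont.continuousAt
    have hinner : HasDerivAt (fun s : ℝ => T + s) 1 0 :=
      (hasDerivAt_id 0).const_add T
    have := HasDerivAt.comp 0 (by simpa using hbase) hinner
    rw [mul_one] at this
    exact this
  have hD2 : HasDerivAt (fun s : ℝ => ∫ u in (0:ℝ)..s, g u) (g 0) 0 :=
    intervalIntegral.integral_hasDerivAt_right (hgcont.intervalIntegrable _ _)
      hgcont.aestronglyMeasurable.stronglyMeasurableAtFilter hgcont.continuousAt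
  have hg0 : g 0 = Real.log ‖ξ‖ := by
    simp [hgdef, hM0 x]
  have hmain : HasDerivAt
      (fun s : ℝ => (1 / T) * ∫ t in (0:ℝ)..T, Real.log ‖M t (φ s x) (M s x ξ)‖)
      ((1 / T) * (Real.log ‖M T x ξ‖ - Real.log ‖ξ‖)) 0 := by
    have h := (hD1.sub hD2).const_mul (1 / T)
    rw [hg0] at h
    exact h.congr_of_eventuallyEq (Filter.Eventually.of_forall fun s => by simp only [hrw s, Pi.sub_apply])
  refine ⟨hmain, ?_⟩
  intro C θ hC hθ hbound
  have hξpos : (0:ℝ) < ‖ξ‖ := norm_pos_iff.mpr hξ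
  have hMpos : (0:ℝ) < ‖M T x ξ‖ := norm_pos_iff.mpr (hMξne T)
  have hlog : Real.log ‖M T x ξ‖ ≤ Real.log C + (-θ * T) + Real.log ‖ξ‖ := by
    have h := Real.log_le_log hMpos hbound
    rwa [Real.log_mul (by positivity) (ne_of_gt hξpos),
      Real.log_mul (ne_of_gt hC) (Real.exp_ne_zero _), Real.log_exp] at h
  constructor
  · have h2 : Real.log ‖M T x ξ‖ - Real.log ‖ξ‖ ≤ Real.log C - θ * T := by linarith
    have h3 : (1 / T) * (Real.log ‖M T x ξ‖ - Real.log ‖ξ‖)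
        ≤ (1 / T) * (Real.log C - θ * T) :=
      mul_le_mul_of_nonneg_left h2 (by positivity)
    have h4 : (1 / T) * (Real.log C - θ * T) = Real.log C / T - θ := by
      field_simp [mul_comm θ T]
    linarith
  · intro hTgt
    have h5 : Real.log C < T * θ := (div_lt_iff₀ hθ).mp hTgt
    rw [sub_neg, div_lt_iff₀ hT]
    linarith
end
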